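/- Let F be a prime flat knotoid diagram with a minimal shortcut γ. If both complementary regions adjacent to an edge e of F are γ-regions, then e is a γ-edge. -/
import Mathlib

noncomputable section

/-- A combinatorial model of a flat knotoid diagram in the sphere `S²`:
an embedded graph coming from a generic immersion of `[0,1]` into `S²`,
with two univalent vertices (the endpoints of the diagram, recorded as the
`none`-ends of the two outer edges), all other vertices (the `Crossing`s)
four-valent, together with the complementary regions.  Edges are oriented
according to the orientation of the diagram and each edge records the
complementary region lying on its left and on its right. -/
structure FlatKnotoid where
  /-- the crossings (double points) of the diagram -/
  Crossing : Type
  /-- the edges of the diagram (maximal arcs between crossings/endpoints) -/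
  Edge : Type
  /-- the complementary regions of the diagram in `S²` -/
  Region : Type
  crossingFinite : Finite Crossing
  edgeFinite : Finite Edge
  regionFinite : Finite Region
  /-- the tail of an oriented edge (`none` = the beginning of the diagram) -/
  tail : Edge → Option Crossing
  /-- the head of an oriented edge (`none` = the end of the diagram) -/
  head : Edge → Option Crossing
  /-- the region on the left of an oriented edge -/
  left : Edge → Region
  /-- the region on the right of an oriented edge -/
  right : Edge → Region
  /-- the outer edge adjacent to the beginning of the diagram -/
  outer₁ : Edge
  /-- the outer edge adjacent to the end of the diagram -/
  outer₂ : Edge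
  tail_outer₁ : tail outer₁ = none
  head_outer₂ : head outer₂ = none
  tail_eq_none : ∀ e, tail e = none → e = outer₁
  head_eq_none : ∀ e, head e = none → e = outer₂
  /-- every crossing is four-valent -/
  degree_four : ∀ v : Crossing,
    Set.ncard {e | tail e = some v} + Set.ncard {e | head e = some v} = 4
  /-- Euler's formula for the sphere:
  `(#crossings + 2) - #edges + #regions = 2` -/
  euler : Nat.card Crossing + Nat.card Region = Nat.card Edge

namespace FlatKnotoid

/-- the crossing number of a flat knotoid diagram -/
def cr (F : FlatKnotoid) : ℕ := Nat.card F.Crossing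

/-- the edge `e` is adjacent to the crossing `v` -/
def Adj (F : FlatKnotoid) (v : F.Crossing) (e : F.Edge) : Prop :=
  F.tail e = some v ∨ F.head e = some v

/-- the edge `e` is adjacent to the region `r` -/
def AdjR (F : FlatKnotoid) (e : F.Edge) (r : F.Region) : Prop :=
  F.left e = r ∨ F.right e = r

/-- A combinatorial shortcut of a flat knotoid diagram: the intersection
pattern of an embedded arc joining the beginning of the diagram to its end
and meeting the diagram transversely in finitely many points distinct from
the crossings, recorded by the sequence of complementary regions the arc
visits and the edges it crosses.  The number of intersection points of the
shortcut with the diagram is `n`. -/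
structure Shortcut (F : FlatKnotoid) where
  /-- the number of intersections of the shortcut with the diagram -/
  n : ℕ
  /-- the regions visited, in order -/
  region : Fin (n + 1) → F.Region
  /-- the edges crossed, in order -/
  edge : Fin n → F.Edge
  /-- the shortcut starts at the beginning of the diagram,
  in a region adjacent to the first outer edge -/
  start_adj : region 0 = F.left F.outer₁ ∨ region 0 = F.right F.outer₁
  /-- the shortcut ends at the end of the diagram,
  in a region adjacent to the last outer edge -/
  finish_adj : region (Fin.last n) = F.left F.outer₂ ∨
    region (Fin.last n) = F.right F.outer₂
  /-- at the `i`-th intersection point the shortcut crosses the edge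
  `edge i` transversely, passing from `region i` to `region (i+1)` -/
  crosses : ∀ i : Fin n,
    (F.left (edge i) = region i.castSucc ∧ F.right (edge i) = region i.succ) ∨
    (F.right (edge i) = region i.castSucc ∧ F.left (edge i) = region i.succ)

/-- the height of a flat knotoid diagram: the minimal number of
intersections of a shortcut with the diagram -/
def height (F : FlatKnotoid) : ℕ := sInf {m | ∃ γ : Shortcut F, γ.n = m}

/-- a shortcut is minimal if it realizes the height -/
def Shortcut.Minimal {F : FlatKnotoid} (γ : Shortcut F) : Prop := γ.n = F.height

/-- `e` is a `γ`-edge: either an outer edge, or an edge met by `γ` -/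
def Shortcut.IsGammaEdge {F : FlatKnotoid} (γ : Shortcut F) (e : F.Edge) : Prop :=
  e = F.outer₁ ∨ e = F.outer₂ ∨ ∃ i, γ.edge i = e

/-- `r` is a `γ`-region: a complementary region met by `γ` -/
def Shortcut.IsGammaRegion {F : FlatKnotoid} (γ : Shortcut F) (r : F.Region) : Prop :=
  ∃ i, γ.region i = r

/-- the number of `γ`-edges adjacent to the crossing `v`,
counted with multiplicity (the type of the crossing `v`) -/
def Shortcut.gammaDeg {F : FlatKnotoid} (γ : Shortcut F) (v : F.Crossing) : ℕ :=
  Set.ncard {e | F.tail e = some v ∧ γ.IsGammaEdge e} +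
    Set.ncard {e | F.head e = some v ∧ γ.IsGammaEdge e}

/-- `cₖ(F,γ)`: the number of crossings of type `k`, i.e. adjacent to exactly
`k` `γ`-edges counted with multiplicity -/
def Shortcut.typeCount {F : FlatKnotoid} (γ : Shortcut F) (k : ℕ) : ℕ :=
  Set.ncard {v : F.Crossing | γ.gammaDeg v = k}

end FlatKnotoid

namespace FlatKnotoid

/-- Two distinct edges `e`, `e'` are linked if there is an embedded circle
meeting the diagram transversely in exactly one interior point of each of
them: combinatorially, the pairs of regions adjacent to `e` and `e'` match. -/
def Linked (F : FlatKnotoid) (e e' : F.Edge) : Prop :=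
  (F.left e = F.left e' ∧ F.right e = F.right e') ∨
    (F.left e = F.right e' ∧ F.right e = F.left e')

/-- Combinatorial rendering of Turaev's primality conditions for a flat
knotoid diagram: (i) every embedded circle meeting the diagram transversely
in exactly two points bounds a disk meeting it along a proper embedded arc or
along two disjoint embedded arcs adjacent to the endpoints (equivalently, two
distinct linked edges must be the two outer edges); (ii) every embedded
circle meeting the diagram transversely in exactly one point bounds a regular
neighbourhood of one of the endpoints (equivalently, an edge with the same
region on both sides is an outer edge). -/
def IsPrime (F : FlatKnotoid) : Prop :=
  (∀ e e' : F.Edge, e ≠ e' → F.Linked e e' →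
      ({e, e'} : Set F.Edge) = {F.outer₁, F.outer₂}) ∧
    (∀ e : F.Edge, F.left e = F.right e → e = F.outer₁ ∨ e = F.outer₂)

end FlatKnotoid


namespace FlatKnotoid

/-- Rerouting: if a shortcut visits the two regions adjacent to `e` at
positions `p < q`, then there is a shortcut of length `p + 1 + (n - q)`
obtained by crossing `e` instead of following the middle part. -/
lemma Shortcut.exists_short (F : FlatKnotoid) (γ : Shortcut F) (e : F.Edge)
    (p q : ℕ) (hpq : p < q) (hqn : q ≤ γ.n)
    (hc : (F.left e = γ.region ⟨p, by omega⟩ ∧ F.right e = γ.region ⟨q, by omega⟩) ∨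
      (F.right e = γ.region ⟨p, by omega⟩ ∧ F.left e = γ.region ⟨q, by omega⟩)) :
    ∃ δ : Shortcut F, δ.n = p + 1 + (γ.n - q) := by
  refine ⟨{ n := p + 1 + (γ.n - q)
            region := fun k => if h : (k : ℕ) ≤ p then γ.region ⟨k, by omega⟩
              else γ.region ⟨(k : ℕ) - (p+1) + q, by have := k.isLt; omega⟩
            edge := fun k => if h : (k : ℕ) < p then γ.edge ⟨k, by omega⟩
              else if h2 : (k : ℕ) = p then e
              else γ.edge ⟨(k : ℕ) - (p+1) + q, by have := k.isLt; omega⟩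
            start_adj := ?_
            finish_adj := ?_
            crosses := ?_ }, rfl⟩
  · have h0 : ((0 : Fin (p + 1 + (γ.n - q) + 1)) : ℕ) = 0 := rfl
    rw [dif_pos (by omega : ((0 : Fin (p + 1 + (γ.n - q) + 1)) : ℕ) ≤ p)]
    have : (⟨((0 : Fin (p + 1 + (γ.n - q) + 1)) : ℕ), by omega⟩ : Fin (γ.n + 1)) = 0 :=
      Fin.ext (by simp [h0])
    rw [this]
    exact γ.start_adj
  · have hlast : ((Fin.last (p + 1 + (γ.n - q))) : ℕ) = p + 1 + (γ.n - q) := rfl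
    rw [dif_neg (by rw [hlast]; omega)]
    have : (⟨((Fin.last (p + 1 + (γ.n - q))) : ℕ) - (p+1) + q, by
        rw [hlast]; omega⟩ : Fin (γ.n + 1)) = Fin.last γ.n :=
      Fin.ext (by simp [hlast]; omega)
    rw [this]
    exact γ.finish_adj
  · intro i
    have hi := i.isLt
    have hcs : ((i.castSucc : Fin (p + 1 + (γ.n - q) + 1)) : ℕ) = (i : ℕ) := rfl
    have hsc : ((i.succ : Fin (p + 1 + (γ.n - q) + 1)) : ℕ) = (i : ℕ) + 1 := rfl
    rcases lt_trichotomy (i : ℕ) p with h | h | h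
    · rw [dif_pos h, dif_pos (by omega : ((i.castSucc : Fin _) : ℕ) ≤ p),
        dif_pos (by omega : ((i.succ : Fin _) : ℕ) ≤ p)]
      exact γ.crosses ⟨i, by omega⟩
    · rw [dif_neg (by omega), dif_pos (by omega : ((i : ℕ) : ℕ) = p),
        dif_pos (by omega : ((i.castSucc : Fin _) : ℕ) ≤ p),
        dif_neg (by omega : ¬ ((i.succ : Fin _) : ℕ) ≤ p)]
      have e1 : (⟨((i.castSucc : Fin _) : ℕ), by omega⟩ : Fin (γ.n + 1)) = ⟨p, by omega⟩ :=
        Fin.ext (by simp [hcs, h])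
      have e2 : (⟨((i.succ : Fin _) : ℕ) - (p+1) + q, by omega⟩ : Fin (γ.n + 1)) =
          ⟨q, by omega⟩ := Fin.ext (by simp only [hsc, h]; omega)
      rw [e1, e2]
      exact hc
    · rw [dif_neg (by omega), dif_neg (by omega : ¬ ((i : ℕ) : ℕ) = p),
        dif_neg (by omega : ¬ ((i.castSucc : Fin _) : ℕ) ≤ p),
        dif_neg (by omega : ¬ ((i.succ : Fin _) : ℕ) ≤ p)]
      have hb : (i : ℕ) - (p+1) + q < γ.n := by omega
      have hcr := γ.crosses ⟨(i : ℕ) - (p+1) + q, hb⟩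
      have e1 : (⟨((i.castSucc : Fin _) : ℕ) - (p+1) + q, by omega⟩ : Fin (γ.n + 1)) =
          (⟨(i : ℕ) - (p+1) + q, hb⟩ : Fin γ.n).castSucc := Fin.ext (by simp [hcs])
      have e2 : (⟨((i.succ : Fin _) : ℕ) - (p+1) + q, by omega⟩ : Fin (γ.n + 1)) =
          (⟨(i : ℕ) - (p+1) + q, hb⟩ : Fin γ.n).succ := Fin.ext (by simp [hsc]; omega)
      rw [e1, e2]
      exact hcr

/-- Key step: if a minimal shortcut of a prime diagram visits the two
regions adjacent to `e` at positions `p < q`, then `e` is a `γ`-edge. -/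
lemma Shortcut.key (F : FlatKnotoid) (hp : F.IsPrime) (γ : Shortcut F)
    (hγ : γ.Minimal) (e : F.Edge) (p q : ℕ) (hpq : p < q) (hqn : q ≤ γ.n)
    (hc : (F.left e = γ.region ⟨p, by omega⟩ ∧ F.right e = γ.region ⟨q, by omega⟩) ∨
      (F.right e = γ.region ⟨p, by omega⟩ ∧ F.left e = γ.region ⟨q, by omega⟩)) :
    γ.IsGammaEdge e := by
  obtain ⟨δ, hδ⟩ := γ.exists_short F e p q hpq hqn hc
  have hle : F.height ≤ δ.n := Nat.sInf_le ⟨δ, rfl⟩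
  have h1 : F.height ≤ p + 1 + (γ.n - q) := hδ ▸ hle
  have h2 : γ.n = F.height := hγ
  have hmin : γ.n ≤ p + 1 + (γ.n - q) := by omega
  have hq1 : q = p + 1 := by omega
  subst hq1
  set i0 : Fin γ.n := ⟨p, by omega⟩ with hi0
  by_cases he : γ.edge i0 = e
  · exact Or.inr (Or.inr ⟨i0, he⟩)
  · have hcr := γ.crosses i0
    have hcast : i0.castSucc = (⟨p, by omega⟩ : Fin (γ.n + 1)) := Fin.ext rfl
    have hsucc : i0.succ = (⟨p + 1, by omega⟩ : Fin (γ.n + 1)) := Fin.ext rfl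
    rw [hcast, hsucc] at hcr
    have hlink : F.Linked e (γ.edge i0) := by
      rcases hc with ⟨h1, h2⟩ | ⟨h1, h2⟩ <;> rcases hcr with ⟨g1, g2⟩ | ⟨g1, g2⟩
      · exact Or.inl ⟨h1.trans g1.symm, h2.trans g2.symm⟩
      · exact Or.inr ⟨h1.trans g1.symm, h2.trans g2.symm⟩
      · exact Or.inr ⟨h2.trans g2.symm, h1.trans g1.symm⟩
      · exact Or.inl ⟨h2.trans g2.symm, h1.trans g1.symm⟩
    have hset := hp.1 e (γ.edge i0) (fun h => he h.symm) hlink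
    have hmem : e ∈ ({F.outer₁, F.outer₂} : Set F.Edge) := by
      rw [← hset]; exact Or.inl rfl
    rcases hmem with h | h
    · exact Or.inl h
    · exact Or.inr (Or.inl h)

end FlatKnotoid

open FlatKnotoid in
/-- Let `F` be a prime flat knotoid diagram with a minimal shortcut `γ`.
If both complementary regions adjacent to an edge `e` of `F` are
`γ`-regions, then `e` is a `γ`-edge. -/
theorem gammaEdge_of_adjacent_gammaRegions (F : FlatKnotoid)
    (hp : F.IsPrime) (γ : Shortcut F) (hγ : γ.Minimal) (e : F.Edge)
    (hl : γ.IsGammaRegion (F.left e)) (hr : γ.IsGammaRegion (F.right e)) :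
    γ.IsGammaEdge e := by
  by_cases hlr : F.left e = F.right e
  · rcases hp.2 e hlr with h | h
    · exact Or.inl h
    · exact Or.inr (Or.inl h)
  · obtain ⟨a, ha⟩ := hl
    obtain ⟨b, hb⟩ := hr
    rcases lt_trichotomy a b with h | h | h
    · refine γ.key F hp hγ e (a : ℕ) (b : ℕ) h (by omega) ?_
      exact Or.inl ⟨by rw [← ha], by rw [← hb]⟩
    · exact absurd (ha ▸ h ▸ hb : F.left e = F.right e) hlr
    · refine γ.key F hp hγ e (b : ℕ) (a : ℕ) h (by omega) ?_
      exact Or.inr ⟨by rw [← hb], by rw [← ha]⟩
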